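/- arXiv:2501.15952 — 4 statements merged into one kernel-verified Lean document; each statement's English description precedes it below -/
import Mathlib

section
/- Let G be a prison-free graph and let K⊆V(G) be a set of 4 vertices inducing a complete graph K4 in G. Then there exists a set F⊆V(G) with K⊆F such that G[F] is complete multipartite. Furthermore, if F is inclusion-wise maximal among sets containing K that induce a complete multipartite subgraph, then for every vertex v∈V(G)∖F, the neighborhood N(v) intersects at most one class of F. -/
namespace PrisonFreePaper

variable {V : Type*}

/-- The prison graph on 5 vertices: `K₅` minus the two edges `{4,2}` and `{4,3}`
(which share the vertex `4`).  Thus `{0,1,2,3}` is a 4-clique and the vertex `4`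
is adjacent exactly to `0` and `1`. -/
def prison : SimpleGraph (Fin 5) where
  Adj a b := a ≠ b ∧ ¬((a = 4 ∧ (b = 2 ∨ b = 3)) ∨ (b = 4 ∧ (a = 2 ∨ a = 3)))
  symm := by
    constructor
    rintro a b ⟨h1, h2⟩
    exact ⟨h1.symm, by tauto⟩
  loopless := by
    constructor
    rintro a ⟨h, _⟩
    exact h rfl

/-- `P` is a 5-vertex set inducing a subgraph of `G` isomorphic to the prison. -/
def InducesPrison (G : SimpleGraph V) (P : Set V) : Prop :=
  ∃ f : Fin 5 ↪ V, Set.range f = P ∧ ∀ a b, G.Adj (f a) (f b) ↔ prison.Adj a b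

/-- `G` is prison-free: no 5-vertex set induces a prison. -/
def PrisonFree (G : SimpleGraph V) : Prop :=
  ¬ ∃ P : Set V, InducesPrison G P

/-- `P` is the set of classes witnessing that the induced subgraph `G[F]` is
complete multipartite: the classes are nonempty, pairwise disjoint, their union
is `F`, and two vertices of `F` are adjacent iff they lie in different classes. -/
def IsCMP (G : SimpleGraph V) (F : Set V) (P : Set (Set V)) : Prop :=
  (∀ C ∈ P, C.Nonempty ∧ C ⊆ F) ∧
  (⋃₀ P = F) ∧
  (∀ C ∈ P, ∀ D ∈ P, C ≠ D → Disjoint C D) ∧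
  (∀ u ∈ F, ∀ v ∈ F, (G.Adj u v ↔ ¬ ∃ C ∈ P, u ∈ C ∧ v ∈ C))

/-- The induced subgraph `G[F]` is complete multipartite. -/
def CMP (G : SimpleGraph V) (F : Set V) : Prop := ∃ P, IsCMP G F P

/-- The induced subgraph `G[F]` is complete multipartite with at least `p` classes. -/
def CMPAtLeast (G : SimpleGraph V) (F : Set V) (p : ℕ) : Prop :=
  ∃ P, IsCMP G F P ∧ ∃ f : Fin p ↪ Set V, ∀ i, f i ∈ P

/-- `F ∈ cmd_p` of the induced subgraph of `G` on the ground set `W`: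
`F` is an inclusion-wise maximal subset of `W` inducing a complete multipartite
graph with at least `p` classes. -/
def Cmd (G : SimpleGraph V) (W : Set V) (p : ℕ) (F : Set V) : Prop :=
  F ⊆ W ∧ CMPAtLeast G F p ∧
    ∀ F', F' ⊆ W → F ⊆ F' → CMPAtLeast G F' p → F' = F

/-- The neighbourhood of `v` in `G` intersects at most one class of `P`. -/
def MeetsAtMostOneClass (G : SimpleGraph V) (P : Set (Set V)) (v : V) : Prop :=
  ∀ C ∈ P, ∀ D ∈ P, (∃ x ∈ C, G.Adj v x) → (∃ y ∈ D, G.Adj v y) → C = D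

/-- The induced subgraph `G[X]`, viewed as a graph on the same vertex set
(only edges with both endpoints in `X` are kept). -/
def inducedOn (G : SimpleGraph V) (X : Set V) : SimpleGraph V where
  Adj a b := G.Adj a b ∧ a ∈ X ∧ b ∈ X
  symm := by constructor; rintro a b ⟨h, ha, hb⟩; exact ⟨h.symm, hb, ha⟩
  loopless := by constructor; rintro a ⟨h, _⟩; exact G.irrefl h

/-- The set of edges of `G` with both endpoints in `X`, i.e. the edges of `G[X]`. -/
def edgesWithin (G : SimpleGraph V) (X : Set V) : Set (Sym2 V) :=
  (inducedOn G X).edgeSet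

/-- `(G,k)` is a yes-instance of Prison-Free Edge Deletion. -/
def DeletionYes (G : SimpleGraph V) (k : ℕ) : Prop :=
  ∃ A : Set (Sym2 V), A ⊆ G.edgeSet ∧ A.Finite ∧ A.ncard ≤ k ∧
    PrisonFree (G.deleteEdges A)

/-- `P` is a strict supergraph of a prison in `G`: a 5-vertex set whose induced
subgraph is `K₅` or `K₅` minus one edge (at most one non-adjacent pair). -/
def StrictSupPrison (G : SimpleGraph V) (P : Set V) : Prop :=
  P.ncard = 5 ∧ ∃ u v : V, ∀ x ∈ P, ∀ y ∈ P, x ≠ y → ¬ G.Adj x y →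
    (x = u ∧ y = v) ∨ (x = v ∧ y = u)

/-- `P` is a supergraph of a prison in `G`: a 5-vertex set whose induced subgraph
contains a prison on `P` as a spanning subgraph, i.e. all non-adjacent pairs in `P`
are among two pairs sharing a common vertex. -/
def SupPrison (G : SimpleGraph V) (P : Set V) : Prop :=
  P.ncard = 5 ∧ ∃ w u v : V, ∀ x ∈ P, ∀ y ∈ P, x ≠ y → ¬ G.Adj x y →
    (({x, y} : Set V) = {w, u} ∨ ({x, y} : Set V) = {w, v})

/-- Hypothesis (H1): every edge of `G` that does not have both endpoints in `S`
is contained in a strict supergraph of a prison in `G`. -/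
def H1 (G : SimpleGraph V) (S : Set V) : Prop :=
  ∀ u v : V, G.Adj u v → ¬(u ∈ S ∧ v ∈ S) →
    ∃ P, StrictSupPrison G P ∧ u ∈ P ∧ v ∈ P

/-- Hypothesis (H2): every 5-vertex set inducing a prison in `G` contains at least
two edges with both endpoints in `S`. -/
def H2 (G : SimpleGraph V) (S : Set V) : Prop :=
  ∀ P, InducesPrison G P →
    ∃ e₁ e₂ : Sym2 V, e₁ ≠ e₂ ∧ e₁ ∈ edgesWithin G (P ∩ S) ∧ e₂ ∈ edgesWithin G (P ∩ S)

/-- `B`: the edges of `G−S` lying in no triangle of `G−S`. -/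
def BSet (G : SimpleGraph V) (S : Set V) : Set (Sym2 V) :=
  {e ∈ edgesWithin G Sᶜ | ¬ ∃ w ∈ Sᶜ, ∀ x ∈ e, G.Adj w x}

/-- `B_e` for the edge `e = ab` of `G[S]`: the edges of `B` both of whose endpoints
are adjacent in `G` to both `a` and `b`. -/
def BOf (G : SimpleGraph V) (S : Set V) (a b : V) : Set (Sym2 V) :=
  {f ∈ BSet G S | ∀ x ∈ f, G.Adj x a ∧ G.Adj x b}

/-- `V(B_e)`: the set of endpoints of the edges of `B_e`. -/
def BVerts (G : SimpleGraph V) (S : Set V) (a b : V) : Set V :=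
  {x | ∃ f ∈ BOf G S a b, x ∈ f}

/-- The graph `G ∪ A` obtained by adding the pairs in `A` as edges. -/
def addEdges (G : SimpleGraph V) (A : Set (Sym2 V)) : SimpleGraph V :=
  G ⊔ SimpleGraph.fromEdgeSet A

/-- `A` is a prison-free completion set for `G`: a set of non-edges (unordered
pairs of distinct vertices not adjacent in `G`) whose addition makes `G` prison-free. -/
def CompletionSet (G : SimpleGraph V) (A : Set (Sym2 V)) : Prop :=
  (∀ e ∈ A, ¬ e.IsDiag) ∧ (∀ e ∈ A, e ∉ G.edgeSet) ∧ PrisonFree (addEdges G A)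

/-- `A` is a minimal prison-free completion set for `G`. -/
def MinCompletionSet (G : SimpleGraph V) (A : Set (Sym2 V)) : Prop :=
  CompletionSet G A ∧ ∀ A' ⊂ A, ¬ CompletionSet G A'

/-- `A` is a solution to the instance `(G,k)` of Prison-Free Edge Completion:
a prison-free completion set of size at most `k`. -/
def Solution (G : SimpleGraph V) (k : ℕ) (A : Set (Sym2 V)) : Prop :=
  CompletionSet G A ∧ A.Finite ∧ A.ncard ≤ k

/-- `A` is a minimal solution to `(G,k)`: a solution no proper subset of which is a
prison-free completion set. -/
def MinSolution (G : SimpleGraph V) (k : ℕ) (A : Set (Sym2 V)) : Prop :=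
  Solution G k A ∧ ∀ A' ⊂ A, ¬ CompletionSet G A'

/-- `K` is a set of 4 vertices inducing a complete graph `K₄` in `G`. -/
def IsK4 (G : SimpleGraph V) (K : Set V) : Prop :=
  K.ncard = 4 ∧ ∀ u ∈ K, ∀ v ∈ K, u ≠ v → G.Adj u v

/-- The modulator property of the set `S` (output of the sunflower-based
Lemma): for every prison `P` in `G` and every edge set `A ⊆ E(G)` with `|A| ≤ k`,
if deleting `A` from `G[S]` yields a prison-free graph then `A` contains an edge
of `G[P]`. -/
def GoodModulator (G : SimpleGraph V) (k : ℕ) (S : Set V) : Prop :=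
  ∀ P : Set V, InducesPrison G P →
    ∀ A : Set (Sym2 V), A ⊆ G.edgeSet → A.Finite → A.ncard ≤ k →
      PrisonFree ((inducedOn G S).deleteEdges A) →
      ∃ e ∈ A, e ∈ edgesWithin G P

/-- Hypothesis (H3): for every `F' ∈ cmd₃(G−S)` and every inclusion-wise maximal
set `F ⊇ F'` such that `G[F]` is complete multipartite, some vertex outside `F`
has neighbours in at least two classes of `F`. -/
def H3 (G : SimpleGraph V) (S : Set V) : Prop :=
  ∀ F', Cmd G Sᶜ 3 F' → ∀ F : Set V, F' ⊆ F → CMP G F →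
    (∀ F'', F ⊆ F'' → CMP G F'' → F'' = F) →
    ∃ v ∉ F, ∃ P, IsCMP G F P ∧
      ∃ C ∈ P, ∃ D ∈ P, C ≠ D ∧ (∃ x ∈ C, G.Adj v x) ∧ ∃ y ∈ D, G.Adj v y

/-- `F` is an inclusion-wise maximal subset of `W` inducing a complete
multipartite subgraph of `G`. -/
def MaxCMPon (G : SimpleGraph V) (W F : Set V) : Prop :=
  F ⊆ W ∧ CMP G F ∧ ∀ F'', F'' ⊆ W → F ⊆ F'' → CMP G F'' → F'' = F

/-!
A graph is complete multipartite exactly when non-adjacency is transitive, the classes being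
the non-adjacency classes. Let `F ⊇ K` be maximal and let `v ∉ F` have neighbours `x`, `y` in
two different classes. Two vertices of `K` avoid any two given classes, and together with them
every violation of the following two facts is a prison: the non-neighbours of `v` in `F` form a
union of classes, and they are pairwise non-adjacent. So they form at most one class, hence
non-adjacency stays transitive on `F ∪ {v}`, contradicting the maximality of `F`.
-/

variable {G : SimpleGraph V} {F K : Set V}

theorem exists_inducesPrison {p q r s t : V} (hpq : G.Adj p q) (hpr : G.Adj p r)
    (hps : G.Adj p s) (hqr : G.Adj q r) (hqs : G.Adj q s) (hrs : G.Adj r s)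
    (htp : G.Adj t p) (htq : G.Adj t q) (htr : ¬G.Adj t r) (hts : ¬G.Adj t s) :
    ∃ P, InducesPrison G P := by
  have hrt : r ≠ t := fun h => hts (h ▸ hrs)
  have hst : s ≠ t := fun h => htr (h ▸ hrs.symm)
  have hinj : Function.Injective ![p, q, r, s, t] := by
    have := hpq.ne; have := hpr.ne; have := hps.ne; have := hqr.ne; have := hqs.ne
    have := hrs.ne; have := htp.ne; have := htq.ne
    intro a b hab
    fin_cases a <;> fin_cases b <;> simp_all [eq_comm]
  refine ⟨_, ⟨![p, q, r, s, t], hinj⟩, rfl, fun a b => ?_⟩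
  have := hpq.symm; have := hpr.symm; have := hps.symm; have := hqr.symm; have := hqs.symm
  have := hrs.symm; have := htp.symm; have := htq.symm
  have : ¬G.Adj r t := fun h => htr h.symm
  have : ¬G.Adj s t := fun h => hts h.symm
  fin_cases a <;> fin_cases b <;> simp_all [prison]

theorem isCompleteMultipartite_induce_iff :
    (G.induce F).IsCompleteMultipartite ↔
      ∀ u ∈ F, ∀ w ∈ F, ∀ z ∈ F, ¬G.Adj u w → ¬G.Adj w z → ¬G.Adj u z :=
  ⟨fun h u hu w hw z hz => h.trans ⟨u, hu⟩ ⟨w, hw⟩ ⟨z, hz⟩,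
    fun h => ⟨fun u w z => h u u.2 w w.2 z z.2⟩⟩

theorem isCompleteMultipartite_induce_of_isClique (hK : G.IsClique K) :
    (G.induce K).IsCompleteMultipartite :=
  isCompleteMultipartite_induce_iff.2 fun _ hu _ hw _ _ huw hwz =>
    (not_ne_iff.1 fun hne => huw (hK hu hw hne)) ▸ hwz

theorem adj_or_adj_of_adj (hF : (G.induce F).IsCompleteMultipartite) {x y z : V}
    (hx : x ∈ F) (hy : y ∈ F) (hz : z ∈ F) (hxy : G.Adj x y) : G.Adj z x ∨ G.Adj z y := by
  by_contra! h
  exact isCompleteMultipartite_induce_iff.1 hF x hx z hz y hy (fun h' => h.1 h'.symm) h.2 hxy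

theorem cmp_of_isCompleteMultipartite_induce (hF : (G.induce F).IsCompleteMultipartite) :
    CMP G F := by
  have htrans := isCompleteMultipartite_induce_iff.1 hF
  have hclass : ∀ u ∈ F, ∀ w ∈ F, ¬G.Adj u w →
      {z ∈ F | ¬G.Adj u z} = {z ∈ F | ¬G.Adj w z} := fun u hu w hw huw =>
    Set.ext fun z => and_congr_right fun hz =>
      ⟨htrans w hw u hu z hz (fun h => huw h.symm), htrans u hu w hw z hz huw⟩
  refine ⟨(fun u => {z ∈ F | ¬G.Adj u z}) '' F, ?_, ?_, ?_, ?_⟩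
  · rintro _ ⟨u, hu, rfl⟩
    exact ⟨⟨u, hu, G.irrefl⟩, Set.sep_subset _ _⟩
  · refine Set.Subset.antisymm (Set.sUnion_subset ?_) fun u hu => ?_
    · rintro _ ⟨u, -, rfl⟩
      exact Set.sep_subset _ _
    · exact ⟨_, ⟨u, hu, rfl⟩, hu, G.irrefl⟩
  · rintro _ ⟨u, hu, rfl⟩ _ ⟨w, hw, rfl⟩ hne
    refine Set.disjoint_left.2 fun z ⟨hz, huz⟩ ⟨_, hwz⟩ => hne ?_
    exact (hclass u hu z hz huz).trans (hclass w hw z hz hwz).symm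
  · intro a ha b hb
    constructor
    · rintro hab ⟨_, ⟨u, hu, rfl⟩, ⟨-, hua⟩, ⟨-, hub⟩⟩
      exact htrans a ha u hu b hb (fun h => hua h.symm) hub hab
    · intro hn
      by_contra hab
      exact hn ⟨_, ⟨a, ha, rfl⟩, ⟨ha, G.irrefl⟩, ⟨hb, hab⟩⟩

namespace IsCMP

variable {P : Set (Set V)} {C D : Set V} {u w : V}

theorem mem_of_mem (hP : IsCMP G F P) (hC : C ∈ P) (hu : u ∈ C) : u ∈ F :=
  (hP.1 C hC).2 hu

theorem eq_of_mem (hP : IsCMP G F P) (hC : C ∈ P) (hD : D ∈ P) (huC : u ∈ C) (huD : u ∈ D) :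
    C = D :=
  Classical.byContradiction fun h => (hP.2.2.1 C hC D hD h).ne_of_mem huC huD rfl

theorem adj_of_ne (hP : IsCMP G F P) (hC : C ∈ P) (hD : D ∈ P) (huC : u ∈ C) (hwD : w ∈ D)
    (hCD : C ≠ D) : G.Adj u w :=
  (hP.2.2.2 u (hP.mem_of_mem hC huC) w (hP.mem_of_mem hD hwD)).2 fun ⟨_, hE, huE, hwE⟩ =>
    hCD ((hP.eq_of_mem hC hE huC huE).trans (hP.eq_of_mem hE hD hwE hwD))

theorem isCompleteMultipartite_induce (hP : IsCMP G F P) :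
    (G.induce F).IsCompleteMultipartite := by
  refine isCompleteMultipartite_induce_iff.2 fun u hu w hw z hz huw hwz hadj => ?_
  obtain ⟨C, hC, huC, hwC⟩ := not_not.1 ((hP.2.2.2 u hu w hw).not.1 huw)
  obtain ⟨D, hD, hwD, hzD⟩ := not_not.1 ((hP.2.2.2 w hw z hz).not.1 hwz)
  exact (hP.2.2.2 u hu z hz).1 hadj ⟨C, hC, huC, hP.eq_of_mem hC hD hwC hwD ▸ hzD⟩

end IsCMP

section CliqueInCompleteMultipartite

variable (hF : (G.induce F).IsCompleteMultipartite) (hKF : K ⊆ F) (hK : G.IsClique K)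
include hF hKF hK

theorem subsingleton_not_adj_of_isClique {p : V} (hp : p ∈ F) :
    {a ∈ K | ¬G.Adj a p}.Subsingleton := by
  rintro a ⟨ha, hap⟩ b ⟨hb, hbp⟩
  by_contra hab
  exact isCompleteMultipartite_induce_iff.1 hF a (hKF ha) p hp b (hKF hb) hap
    (fun h => hbp h.symm) (hK ha hb hab)

theorem exists_adj_adj_of_isClique (hK4 : 4 ≤ K.ncard) {p q : V} (hp : p ∈ F) (hq : q ∈ F) :
    ∃ a ∈ K, ∃ b ∈ K, G.Adj a b ∧ G.Adj a p ∧ G.Adj a q ∧ G.Adj b p ∧ G.Adj b q := by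
  have : Finite K := (Set.finite_of_ncard_pos (by omega)).to_subtype
  have hsmall : ∀ z ∈ F, {a ∈ K | ¬G.Adj a z}.ncard ≤ 1 := fun z hz =>
    Set.ncard_le_one_iff_subsingleton.2 (subsingleton_not_adj_of_isClique hF hKF hK hz)
  have hcover : K ⊆ {a ∈ K | G.Adj a p ∧ G.Adj a q} ∪
      ({a ∈ K | ¬G.Adj a p} ∪ {a ∈ K | ¬G.Adj a q}) := fun a ha => by
    by_cases hap : G.Adj a p <;> by_cases haq : G.Adj a q <;> simp [ha, hap, haq]
  have hcard : 1 < {a ∈ K | G.Adj a p ∧ G.Adj a q}.ncard := by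
    have := (Set.ncard_le_ncard hcover).trans <| (Set.ncard_union_le _ _).trans <|
      Nat.add_le_add_left (Set.ncard_union_le _ _) _
    have := hsmall p hp
    have := hsmall q hq
    omega
  obtain ⟨a, ⟨ha, hap, haq⟩, b, ⟨hb, hbp, hbq⟩, hab⟩ := (Set.one_lt_ncard).1 hcard
  exact ⟨a, ha, b, hb, hK ha hb hab, hap, haq, hbp, hbq⟩

end CliqueInCompleteMultipartite

namespace PrisonFree

variable (hG : PrisonFree G) (hF : (G.induce F).IsCompleteMultipartite) (hKF : K ⊆ F)
  (hK : G.IsClique K) (hK4 : 4 ≤ K.ncard)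
include hG hF hKF hK hK4

theorem not_adj_trans_insert_left {v x b c : V} (hx : x ∈ F) (hvx : G.Adj v x)
    (hxc : G.Adj x c) (hb : b ∈ F) (hc : c ∈ F) (hvb : ¬G.Adj v b) (hbc : ¬G.Adj b c) :
    ¬G.Adj v c := by
  have htrans := isCompleteMultipartite_induce_iff.1 hF
  intro hvc
  have hxb : G.Adj x b := by
    by_contra h
    exact htrans x hx b hb c hc h hbc hxc
  obtain ⟨a, ha, a', ha', haa', hab, hax, ha'b, ha'x⟩ :=
    exists_adj_adj_of_isClique hF hKF hK hK4 hb hx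
  have hac : G.Adj a c := by
    by_contra h
    exact htrans a (hKF ha) c hc b hb h (fun h' => hbc h'.symm) hab
  have ha'c : G.Adj a' c := by
    by_contra h
    exact htrans a' (hKF ha') c hc b hb h (fun h' => hbc h'.symm) ha'b
  -- The prisons: `K₄` on `{a, a', c, v}` plus `b`, on `{x, a, b, a'}` or `{x, a', b, a}` plus `v`,
  -- and on `{c, x, a, a'}` plus `v`.
  by_cases hva : G.Adj v a <;> by_cases hva' : G.Adj v a'
  · exact hG <| exists_inducesPrison haa' hac hva.symm ha'c hva'.symm hvc.symm hab.symm
      ha'b.symm hbc fun h => hvb h.symm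
  · exact hG <| exists_inducesPrison hax.symm hxb ha'x.symm hab haa' ha'b.symm hvx hva hvb hva'
  · exact hG <| exists_inducesPrison ha'x.symm hxb hax.symm ha'b haa'.symm hab.symm hvx hva'
      hvb hva
  · exact hG <| exists_inducesPrison hxc.symm hac.symm ha'c.symm hax.symm ha'x.symm haa' hvc
      hvx hva hva'

theorem not_adj_trans_insert_mid {v x y a c : V} (hx : x ∈ F) (hy : y ∈ F) (hxy : G.Adj x y)
    (hvx : G.Adj v x) (hvy : G.Adj v y) (ha : a ∈ F) (hc : c ∈ F) (hav : ¬G.Adj a v)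
    (hvc : ¬G.Adj v c) : ¬G.Adj a c := by
  have hva : ¬G.Adj v a := fun h => hav h.symm
  have hnonnbr : ∀ z ∈ F, ¬G.Adj v z → G.Adj z x ∧ G.Adj z y := fun z hz hvz =>
    ⟨not_not.1 fun h =>
        not_adj_trans_insert_left hG hF hKF hK hK4 hy hvy hxy.symm hz hx hvz h hvx,
      not_not.1 fun h => not_adj_trans_insert_left hG hF hKF hK hK4 hx hvx hxy hz hy hvz h hvy⟩
  obtain ⟨hax, hay⟩ := hnonnbr a ha hva
  obtain ⟨hcx, hcy⟩ := hnonnbr c hc hvc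
  exact fun hac => hG <| exists_inducesPrison hxy hax.symm hcx.symm hay.symm hcy.symm hac hvx hvy
    hva hvc

theorem isCompleteMultipartite_induce_insert {v x y : V} (hx : x ∈ F) (hy : y ∈ F)
    (hxy : G.Adj x y) (hvx : G.Adj v x) (hvy : G.Adj v y) :
    (G.induce (insert v F)).IsCompleteMultipartite := by
  have hleft : ∀ b ∈ F, ∀ c ∈ F, ¬G.Adj v b → ¬G.Adj b c → ¬G.Adj v c := by
    intro b hb c hc
    obtain hcx | hcy := adj_or_adj_of_adj hF hx hy hc hxy
    · exact not_adj_trans_insert_left hG hF hKF hK hK4 hx hvx hcx.symm hb hc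
    · exact not_adj_trans_insert_left hG hF hKF hK hK4 hy hvy hcy.symm hb hc
  refine isCompleteMultipartite_induce_iff.2 ?_
  rintro u (rfl | hu) w (rfl | hw) z (rfl | hz) huw hwz
  · exact huw
  · exact hwz
  · exact G.irrefl
  · exact hleft w hw z hz huw hwz
  · exact huw
  · exact not_adj_trans_insert_mid hG hF hKF hK hK4 hx hy hxy hvx hvy hu hz huw hwz
  · exact fun h => hleft w hw u hu (fun h' => hwz h'.symm) (fun h' => huw h'.symm) h.symm
  · exact isCompleteMultipartite_induce_iff.1 hF u hu w hw z hz huw hwz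

end PrisonFree

theorem k4_extends_to_cmp_general {V : Type*} (G : SimpleGraph V)
    (hG : PrisonFree G) (K : Set V) (hK : IsK4 G K) :
    (∃ F : Set V, K ⊆ F ∧ CMP G F) ∧
    ∀ F : Set V, K ⊆ F → CMP G F →
      (∀ F' : Set V, K ⊆ F' → F ⊆ F' → CMP G F' → F' = F) →
      ∀ v ∉ F, ∀ P : Set (Set V), IsCMP G F P → MeetsAtMostOneClass G P v := by
  have hclique : G.IsClique K := hK.2
  refine ⟨⟨K, subset_rfl, cmp_of_isCompleteMultipartite_induce
    (isCompleteMultipartite_induce_of_isClique hclique)⟩, ?_⟩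
  rintro F hKF - hmax v hv P hP C hC D hD ⟨x, hxC, hvx⟩ ⟨y, hyD, hvy⟩
  by_contra hCD
  have hvF : CMP G (insert v F) := cmp_of_isCompleteMultipartite_induce <|
    hG.isCompleteMultipartite_induce_insert hP.isCompleteMultipartite_induce hKF hclique
      hK.1.ge (hP.mem_of_mem hC hxC) (hP.mem_of_mem hD hyD) (hP.adj_of_ne hC hD hxC hyD hCD)
      hvx hvy
  exact hv (hmax _ (hKF.trans (Set.subset_insert v F)) (Set.subset_insert v F) hvF ▸
    Set.mem_insert v F)

/-- In a prison-free graph `G`, every 4-set `K` inducing `K₄`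
extends to a set `F ⊇ K` inducing a complete multipartite graph; moreover, if `F`
is inclusion-wise maximal among such sets containing `K`, then the neighbourhood of
every vertex `v ∉ F` intersects at most one class of `F`. -/
theorem k4_extends_to_cmp {V : Type*} [Fintype V] (G : SimpleGraph V)
    (hG : PrisonFree G) (K : Set V) (hK : IsK4 G K) :
    (∃ F : Set V, K ⊆ F ∧ CMP G F) ∧
    ∀ F : Set V, K ⊆ F → CMP G F →
      (∀ F' : Set V, K ⊆ F' → F ⊆ F' → CMP G F' → F' = F) →
      ∀ v ∉ F, ∀ P : Set (Set V), IsCMP G F P → MeetsAtMostOneClass G P v :=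
  k4_extends_to_cmp_general G hG K hK

end PrisonFreePaper
end

section
/- Let G=(V,E) be a prison-free graph and let e∈E be an edge that occurs in at least one induced K4 of G (a 4-vertex set inducing a complete graph and containing both endpoints of e). Then there is exactly one F ∈ cmd_4(G) such that both endpoints of e lie in F (equivalently, such that e is an edge of G[F]). -/
namespace PrisonFreePaper

variable {V : Type*}

/-!
`G[F]` is complete multipartite exactly when non-adjacency is transitive on `F`, and it has at
least `p` classes exactly when `F` also contains a `p`-clique.

Let `F ∈ cmd₄(G)` and let `x ∉ F` be adjacent to both ends of an edge of `F`. Testing `x`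
against a `K₄` inside `F`, every failure of the following two facts exhibits a prison: the
non-neighbours of `x` in `F` are pairwise non-adjacent, and they are closed under lying in the
same class. So they form one whole class of `G[F]` or none, `G[F ∪ {x}]` is still complete
multipartite, and maximality is contradicted. If `F₁, F₂ ∈ cmd₄(G)` share the edge `uv`, a similar
prison argument makes every `x ∈ F₂ \ F₁` adjacent to both ends of an edge of `F₁`; hence
`F₂ ⊆ F₁`, and symmetrically. Existence comes from extending the `K₄` to a maximal set.
-/

section

variable {G : SimpleGraph V}

def NonAdjTransOn (G : SimpleGraph V) (F : Set V) : Prop :=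
  ∀ p ∈ F, ∀ q ∈ F, ∀ r ∈ F, ¬ G.Adj p q → ¬ G.Adj q r → ¬ G.Adj p r

def nonAdjClass (G : SimpleGraph V) (F : Set V) (w : V) : Set V := {y | y ∈ F ∧ ¬ G.Adj w y}

section CompleteMultipartite

variable {F : Set V} {P : Set (Set V)}

lemma IsCMP.nonAdjTransOn (hP : IsCMP G F P) : NonAdjTransOn G F := by
  obtain ⟨-, -, hdisj, hadj⟩ := hP
  intro p hp q hq r hr hpq hqr hpr
  obtain ⟨C, hC, hpC, hqC⟩ := not_not.mp ((hadj p hp q hq).not.mp hpq)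
  obtain ⟨D, hD, hqD, hrD⟩ := not_not.mp ((hadj q hq r hr).not.mp hqr)
  obtain rfl : C = D := by_contra fun hCD => Set.disjoint_left.mp (hdisj C hC D hD hCD) hqC hqD
  exact (hadj p hp r hr).mp hpr ⟨C, hC, hpC, hrD⟩

lemma IsCMP.exists_clique {p : ℕ} (hP : IsCMP G F P) (f : Fin p ↪ Set V) (hf : ∀ i, f i ∈ P) :
    ∃ k : Fin p → V, (∀ i, k i ∈ F) ∧ Pairwise fun i j => G.Adj (k i) (k j) := by
  obtain ⟨hne, -, hdisj, hadj⟩ := hP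
  choose k hk using fun i => (hne (f i) (hf i)).1
  have hkF : ∀ i, k i ∈ F := fun i => (hne (f i) (hf i)).2 (hk i)
  refine ⟨k, hkF, fun i j hij => (hadj _ (hkF i) _ (hkF j)).mpr ?_⟩
  rintro ⟨C, hC, hiC, hjC⟩
  have hCf : ∀ l, k l ∈ C → C = f l := fun l hl =>
    by_contra fun h => Set.disjoint_left.mp (hdisj C hC (f l) (hf l) h) hl (hk l)
  exact hij (f.injective ((hCf i hiC).symm.trans (hCf j hjC)))

lemma isCMP_image_nonAdjClass (tr : NonAdjTransOn G F) :
    IsCMP G F (nonAdjClass G F '' F) := by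
  refine ⟨?_, ?_, ?_, fun a ha b hb => ⟨?_, fun h => by_contra fun hab => h ?_⟩⟩
  · rintro C ⟨w, hw, rfl⟩
    exact ⟨⟨w, hw, G.irrefl⟩, fun y hy => hy.1⟩
  · refine subset_antisymm ?_ fun y hy => ⟨_, ⟨y, hy, rfl⟩, hy, G.irrefl⟩
    rintro y ⟨-, ⟨w, -, rfl⟩, hy⟩
    exact hy.1
  · rintro - ⟨w, hw, rfl⟩ - ⟨w', hw', rfl⟩ hne
    refine Set.disjoint_left.mpr fun y hy hy' => hne ?_
    have hww' : ¬ G.Adj w w' := tr w hw y hy.1 w' hw' hy.2 (mt G.adj_symm hy'.2)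
    ext z
    exact ⟨fun hz => ⟨hz.1, tr w' hw' w hw z hz.1 (mt G.adj_symm hww') hz.2⟩,
      fun hz => ⟨hz.1, tr w hw w' hw' z hz.1 hww' hz.2⟩⟩
  · rintro hab ⟨-, ⟨w, hw, rfl⟩, haw, hbw⟩
    exact tr a ha w hw b hb (mt G.adj_symm haw.2) hbw.2 hab
  · exact ⟨_, ⟨a, ha, rfl⟩, ⟨ha, G.irrefl⟩, ⟨hb, hab⟩⟩

lemma cmpAtLeast_iff {p : ℕ} :
    CMPAtLeast G F p ↔ NonAdjTransOn G F ∧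
      ∃ k : Fin p → V, (∀ i, k i ∈ F) ∧ Pairwise fun i j => G.Adj (k i) (k j) := by
  refine ⟨fun ⟨P, hP, f, hf⟩ => ⟨hP.nonAdjTransOn, hP.exists_clique f hf⟩, ?_⟩
  rintro ⟨tr, k, hkF, hk⟩
  have hinj : Function.Injective (nonAdjClass G F ∘ k) := fun i j hij => by
    by_contra hne
    have hj : k j ∈ nonAdjClass G F (k i) := (congrFun hij (k j)).mpr ⟨hkF j, G.irrefl⟩
    exact hj.2 (hk hne)
  exact ⟨_, isCMP_image_nonAdjClass tr, ⟨_, hinj⟩, fun i => ⟨k i, hkF i, rfl⟩⟩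

end CompleteMultipartite

lemma PrisonFree.adj_or_adj (hG : PrisonFree G) {a b c d x : V}
    (hab : G.Adj a b) (hac : G.Adj a c) (had : G.Adj a d)
    (hbc : G.Adj b c) (hbd : G.Adj b d) (hcd : G.Adj c d)
    (hxa : G.Adj x a) (hxb : G.Adj x b) (hxc : x ≠ c) (hxd : x ≠ d) :
    G.Adj x c ∨ G.Adj x d := by
  by_contra! h
  obtain ⟨hxc', hxd'⟩ := h
  have hadj : ∀ i j, G.Adj (![a, b, c, d, x] i) (![a, b, c, d, x] j) ↔ prison.Adj i j := by
    intro i j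
    fin_cases i <;> fin_cases j <;> simp [prison, hab, hac, had, hbc, hbd, hcd, hxa, hxb,
      hab.symm, hac.symm, had.symm, hbc.symm, hbd.symm, hcd.symm, hxa.symm, hxb.symm, hxc',
      hxd', mt G.adj_symm hxc', mt G.adj_symm hxd']
  have hinj : Function.Injective ![a, b, c, d, x] := by
    intro i j hij
    fin_cases i <;> fin_cases j <;> simp_all [hab.ne, hac.ne, had.ne, hbc.ne, hbd.ne,
      hcd.ne, hxa.ne, hxb.ne, hab.ne.symm, hac.ne.symm, had.ne.symm, hbc.ne.symm, hbd.ne.symm,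
      hcd.ne.symm, hxa.ne.symm, hxb.ne.symm, hxc.symm, hxd.symm]
  exact hG ⟨_, ⟨⟨_, hinj⟩, rfl, hadj⟩⟩

section Clique

variable {ι : Type*} {F : Set V} {k : ι → V}

lemma NonAdjTransOn.exists_forall_ne_adj [Nonempty ι] (tr : NonAdjTransOn G F)
    (hkF : ∀ i, k i ∈ F) (hk : Pairwise fun i j => G.Adj (k i) (k j)) {w : V} (hw : w ∈ F) :
    ∃ a, ∀ i ≠ a, G.Adj (k i) w := by
  by_cases h : ∃ a, ¬ G.Adj (k a) w
  · obtain ⟨a, ha⟩ := h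
    exact ⟨a, fun i hi => by_contra fun hi' =>
      tr (k i) (hkF i) w hw (k a) (hkF a) hi' (mt G.adj_symm ha) (hk hi)⟩
  · exact ⟨Classical.arbitrary ι, fun i _ => not_not.mp (not_exists.mp h i)⟩

variable {k : Fin 4 → V}

lemma NonAdjTransOn.exists_adj_three (tr : NonAdjTransOn G F) (hkF : ∀ i, k i ∈ F)
    (hk : Pairwise fun i j => G.Adj (k i) (k j)) {w₁ w₂ w₃ : V}
    (hw₁ : w₁ ∈ F) (hw₂ : w₂ ∈ F) (hw₃ : w₃ ∈ F) :
    ∃ i, G.Adj (k i) w₁ ∧ G.Adj (k i) w₂ ∧ G.Adj (k i) w₃ := by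
  obtain ⟨a₁, h₁⟩ := tr.exists_forall_ne_adj hkF hk hw₁
  obtain ⟨a₂, h₂⟩ := tr.exists_forall_ne_adj hkF hk hw₂
  obtain ⟨a₃, h₃⟩ := tr.exists_forall_ne_adj hkF hk hw₃
  have : ∀ a₁ a₂ a₃ : Fin 4, ∃ i, i ≠ a₁ ∧ i ≠ a₂ ∧ i ≠ a₃ := by decide
  obtain ⟨i, hi₁, hi₂, hi₃⟩ := this a₁ a₂ a₃
  exact ⟨i, h₁ i hi₁, h₂ i hi₂, h₃ i hi₃⟩

lemma NonAdjTransOn.exists_two_adj_two (tr : NonAdjTransOn G F) (hkF : ∀ i, k i ∈ F)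
    (hk : Pairwise fun i j => G.Adj (k i) (k j)) {w₁ w₂ : V} (hw₁ : w₁ ∈ F) (hw₂ : w₂ ∈ F) :
    ∃ i j, i ≠ j ∧ G.Adj (k i) w₁ ∧ G.Adj (k i) w₂ ∧ G.Adj (k j) w₁ ∧ G.Adj (k j) w₂ := by
  obtain ⟨a₁, h₁⟩ := tr.exists_forall_ne_adj hkF hk hw₁
  obtain ⟨a₂, h₂⟩ := tr.exists_forall_ne_adj hkF hk hw₂
  have : ∀ a₁ a₂ : Fin 4, ∃ i j, i ≠ j ∧ i ≠ a₁ ∧ i ≠ a₂ ∧ j ≠ a₁ ∧ j ≠ a₂ := by decide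
  obtain ⟨i, j, hij, hi₁, hi₂, hj₁, hj₂⟩ := this a₁ a₂
  exact ⟨i, j, hij, h₁ i hi₁, h₂ i hi₂, h₁ j hj₁, h₂ j hj₂⟩

end Clique

section Extension

variable {F : Set V} {k : Fin 4 → V} {a b x : V}

lemma PrisonFree.adj_or_adj_of_adj_of_adj_of_not_adj (hG : PrisonFree G)
    (tr : NonAdjTransOn G F) (hkF : ∀ i, k i ∈ F) (hk : Pairwise fun i j => G.Adj (k i) (k j))
    {y z : V} (ha : a ∈ F) (hb : b ∈ F) (hy : y ∈ F) (hz : z ∈ F) (hx : x ∉ F)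
    (hab : G.Adj a b) (hyz : G.Adj y z) (hxa : G.Adj x a) (hxb : G.Adj x b)
    (hay : ¬ G.Adj a y) : G.Adj x y ∨ G.Adj x z := by
  by_contra! h
  obtain ⟨hxy, hxz⟩ := h
  have hxF : ∀ {w}, w ∈ F → x ≠ w := fun hw h => hx (h ▸ hw)
  have hby : G.Adj b y := by_contra fun h => tr b hb y hy a ha h (mt G.adj_symm hay) hab.symm
  have haz : G.Adj a z := by_contra fun h => tr y hy a ha z hz (mt G.adj_symm hay) h hyz
  have hadj_y : ∀ i, G.Adj (k i) a → G.Adj (k i) y := fun i hia =>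
    by_contra fun h => tr (k i) (hkF i) y hy a ha h (mt G.adj_symm hay) hia
  by_cases hbz : G.Adj b z
  · obtain ⟨i, hia, hib, hiz⟩ := tr.exists_adj_three hkF hk ha hb hz
    by_cases hxi : G.Adj x (k i)
    · exact (hG.adj_or_adj hib.symm hby hbz (hadj_y i hia) hiz hyz hxb hxi (hxF hy)
        (hxF hz)).elim hxy hxz
    · exact (hG.adj_or_adj hab haz hia.symm hbz hib.symm hiz.symm hxa hxb (hxF hz)
        (hxF (hkF i))).elim hxz hxi
  · have hadj_z : ∀ i, G.Adj (k i) b → G.Adj (k i) z := fun i hib =>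
      by_contra fun h => tr (k i) (hkF i) z hz b hb h (mt G.adj_symm hbz) hib
    obtain ⟨i, j, hij, hia, hib, hja, hjb⟩ := tr.exists_two_adj_two hkF hk ha hb
    have hiy := hadj_y i hia
    have hjy := hadj_y j hja
    by_cases hxi : G.Adj x (k i) <;> by_cases hxj : G.Adj x (k j)
    · exact (hG.adj_or_adj (hk hij) hiy (hadj_z i hib) hjy (hadj_z j hjb) hyz hxi hxj
        (hxF hy) (hxF hz)).elim hxy hxz
    · exact (hG.adj_or_adj hib.symm hby hjb.symm hiy (hk hij) hjy.symm hxb hxi (hxF hy)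
        (hxF (hkF j))).elim hxy hxj
    · exact (hG.adj_or_adj hjb.symm hby hib.symm hjy (hk hij.symm) hiy.symm hxb hxj (hxF hy)
        (hxF (hkF i))).elim hxy hxi
    · exact (hG.adj_or_adj hab hia.symm hja.symm hib.symm hjb.symm (hk hij) hxa hxb
        (hxF (hkF i)) (hxF (hkF j))).elim hxi hxj

lemma PrisonFree.adj_or_adj_of_adj_of_adj (hG : PrisonFree G)
    (tr : NonAdjTransOn G F) (hkF : ∀ i, k i ∈ F) (hk : Pairwise fun i j => G.Adj (k i) (k j))
    {y z : V} (ha : a ∈ F) (hb : b ∈ F) (hy : y ∈ F) (hz : z ∈ F) (hx : x ∉ F)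
    (hab : G.Adj a b) (hyz : G.Adj y z) (hxa : G.Adj x a) (hxb : G.Adj x b) :
    G.Adj x y ∨ G.Adj x z := by
  by_cases hay : G.Adj a y
  · by_cases hby : G.Adj b y
    · by_cases haz : G.Adj a z
      · by_cases hbz : G.Adj b z
        · exact hG.adj_or_adj hab hay haz hby hbz hyz hxa hxb
            (fun h => hx (h ▸ hy)) (fun h => hx (h ▸ hz))
        · exact (hG.adj_or_adj_of_adj_of_adj_of_not_adj tr hkF hk hb ha hz hy hx hab.symm
            hyz.symm hxb hxa hbz).symm
      · exact (hG.adj_or_adj_of_adj_of_adj_of_not_adj tr hkF hk ha hb hz hy hx hab hyz.symm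
          hxa hxb haz).symm
    · exact hG.adj_or_adj_of_adj_of_adj_of_not_adj tr hkF hk hb ha hy hz hx hab.symm hyz
        hxb hxa hby
  · exact hG.adj_or_adj_of_adj_of_adj_of_not_adj tr hkF hk ha hb hy hz hx hab hyz hxa hxb hay

lemma PrisonFree.not_adj_of_not_adj_of_adj_of_adj (hG : PrisonFree G)
    (tr : NonAdjTransOn G F) (hkF : ∀ i, k i ∈ F) (hk : Pairwise fun i j => G.Adj (k i) (k j))
    {p q : V} (ha : a ∈ F) (hb : b ∈ F) (hp : p ∈ F) (hq : q ∈ F) (hx : x ∉ F)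
    (hab : G.Adj a b) (hxa : G.Adj x a) (hxb : G.Adj x b)
    (hxp : ¬ G.Adj x p) (hpq : ¬ G.Adj p q) : ¬ G.Adj x q := by
  intro hxq
  have hadj_q : ∀ i, G.Adj (k i) p → G.Adj (k i) q := fun i hip =>
    by_contra fun h => tr (k i) (hkF i) q hq p hp h (mt G.adj_symm hpq) hip
  have hadj_x : ∀ i, G.Adj (k i) p → G.Adj x (k i) := fun i hip =>
    (hG.adj_or_adj_of_adj_of_adj tr hkF hk ha hb hp (hkF i) hx hab hip.symm hxa hxb).resolve_left
      hxp
  obtain ⟨i, j, hij, hip, -, hjp, -⟩ := tr.exists_two_adj_two hkF hk hp hp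
  -- `k i, k j, q, x` form a `K₄` of which `p` sees exactly `k i` and `k j`
  exact (hG.adj_or_adj (hk hij) (hadj_q i hip) (hadj_x i hip).symm (hadj_q j hjp)
    (hadj_x j hjp).symm hxq.symm hip.symm hjp.symm (fun h => hxp (h ▸ hxq))
    (fun h => hx (h ▸ hp))).elim hpq (mt G.adj_symm hxp)

lemma PrisonFree.nonAdjTransOn_insert (hG : PrisonFree G)
    (tr : NonAdjTransOn G F) (hkF : ∀ i, k i ∈ F) (hk : Pairwise fun i j => G.Adj (k i) (k j))
    (ha : a ∈ F) (hb : b ∈ F) (hx : x ∉ F) (hab : G.Adj a b) (hxa : G.Adj x a)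
    (hxb : G.Adj x b) : NonAdjTransOn G (insert x F) := by
  have hclass : ∀ {p q}, p ∈ F → q ∈ F → ¬ G.Adj x p → ¬ G.Adj p q → ¬ G.Adj x q :=
    fun hp hq => hG.not_adj_of_not_adj_of_adj_of_adj tr hkF hk ha hb hp hq hx hab hxa hxb
  intro p hp q hq r hr hpq hqr
  rcases hp with rfl | hp <;> rcases hq with rfl | hq <;> rcases hr with rfl | hr
  · exact hpq
  · exact hqr
  · exact G.irrefl
  · exact hclass hq hr hpq hqr
  · exact hpq
  · exact fun hpr => (hG.adj_or_adj_of_adj_of_adj tr hkF hk ha hb hp hr hx hab hpr hxa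
      hxb).elim (mt G.adj_symm hpq) hqr
  · exact mt G.adj_symm (hclass hq hp (mt G.adj_symm hqr) (mt G.adj_symm hpq))
  · exact tr p hp q hq r hr hpq hqr

end Extension

section Cmd4

variable {W F F₁ F₂ : Set V} {u v x : V}

lemma Cmd.not_adj_of_adj_of_notMem (hG : PrisonFree G) (hF : Cmd G W 4 F) (hxW : x ∈ W)
    (hx : x ∉ F) {a b : V} (ha : a ∈ F) (hb : b ∈ F) (hab : G.Adj a b) (hxa : G.Adj x a) :
    ¬ G.Adj x b := by
  intro hxb
  obtain ⟨tr, k, hkF, hk⟩ := cmpAtLeast_iff.mp hF.2.1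
  have hins : CMPAtLeast G (insert x F) 4 := cmpAtLeast_iff.mpr
    ⟨hG.nonAdjTransOn_insert tr hkF hk ha hb hx hab hxa hxb, k, fun i => Or.inr (hkF i), hk⟩
  have := hF.2.2 _ (Set.insert_subset hxW hF.1) (Set.subset_insert x F) hins
  exact hx (this ▸ Set.mem_insert x F)

lemma PrisonFree.exists_adj_adj_of_mem_of_notMem (hG : PrisonFree G)
    (h₁ : CMPAtLeast G F₁ 4) (h₂ : CMPAtLeast G F₂ 4) (huv : G.Adj u v)
    (hu₁ : u ∈ F₁) (hv₁ : v ∈ F₁) (hu₂ : u ∈ F₂) (hv₂ : v ∈ F₂) (hx₂ : x ∈ F₂) (hx₁ : x ∉ F₁) :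
    ∃ a ∈ F₁, ∃ b ∈ F₁, G.Adj a b ∧ G.Adj x a ∧ G.Adj x b := by
  wlog hxu : ¬ G.Adj x u generalizing u v
  · by_cases hxv : G.Adj x v
    · exact ⟨u, hu₁, v, hv₁, huv, not_not.mp hxu, hxv⟩
    · exact this huv.symm hv₁ hu₁ hv₂ hu₂ hxv
  obtain ⟨tr₁, k₁, hk₁F, hk₁⟩ := cmpAtLeast_iff.mp h₁
  obtain ⟨tr₂, k₂, hk₂F, hk₂⟩ := cmpAtLeast_iff.mp h₂
  have hxv : G.Adj x v := by_contra fun h => tr₂ u hu₂ x hx₂ v hv₂ (mt G.adj_symm hxu) h huv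
  obtain ⟨i, j, hij, hiu, hiv, hju, hjv⟩ := tr₁.exists_two_adj_two hk₁F hk₁ hu₁ hv₁
  by_cases hxi : G.Adj x (k₁ i)
  · exact ⟨v, hv₁, k₁ i, hk₁F i, hiv.symm, hxv, hxi⟩
  by_cases hxj : G.Adj x (k₁ j)
  · exact ⟨v, hv₁, k₁ j, hk₁F j, hjv.symm, hxv, hxj⟩
  exfalso
  have hxF : ∀ {w}, w ∈ F₁ → x ≠ w := fun hw h => hx₁ (h ▸ hw)
  obtain ⟨l, hlu, hlv, hlx⟩ := tr₂.exists_adj_three hk₂F hk₂ hu₂ hv₂ hx₂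
  by_cases hli : G.Adj (k₂ l) (k₁ i)
  · exact (hG.adj_or_adj hlv.symm huv.symm hiv.symm hlu hli hiu.symm hxv hlx.symm (hxF hu₁)
      (hxF (hk₁F i))).elim hxu hxi
  by_cases hlj : G.Adj (k₂ l) (k₁ j)
  · exact (hG.adj_or_adj hlv.symm huv.symm hjv.symm hlu hlj hju.symm hxv hlx.symm (hxF hu₁)
      (hxF (hk₁F j))).elim hxu hxj
  exact (hG.adj_or_adj huv hiu.symm hju.symm hiv.symm hjv.symm (hk₁ hij) hlu hlv
    (fun h => hxi (h ▸ hlx.symm)) (fun h => hxj (h ▸ hlx.symm))).elim hli hlj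

lemma Cmd.subset_of_adj_mem (hG : PrisonFree G) (h₁ : Cmd G W 4 F₁) (h₂ : Cmd G W 4 F₂)
    (huv : G.Adj u v) (hu₁ : u ∈ F₁) (hv₁ : v ∈ F₁) (hu₂ : u ∈ F₂) (hv₂ : v ∈ F₂) :
    F₂ ⊆ F₁ := by
  intro x hx₂
  by_contra hx₁
  obtain ⟨a, ha, b, hb, hab, hxa, hxb⟩ :=
    hG.exists_adj_adj_of_mem_of_notMem h₁.2.1 h₂.2.1 huv hu₁ hv₁ hu₂ hv₂ hx₂ hx₁
  exact h₁.not_adj_of_adj_of_notMem hG (h₂.1 hx₂) hx₁ ha hb hab hxa hxb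

lemma Cmd.eq_of_adj_mem (hG : PrisonFree G) (h₁ : Cmd G W 4 F₁) (h₂ : Cmd G W 4 F₂)
    (huv : G.Adj u v) (hu₁ : u ∈ F₁) (hv₁ : v ∈ F₁) (hu₂ : u ∈ F₂) (hv₂ : v ∈ F₂) :
    F₁ = F₂ :=
  (h₂.subset_of_adj_mem hG h₁ huv hu₂ hv₂ hu₁ hv₁).antisymm
    (h₁.subset_of_adj_mem hG h₂ huv hu₁ hv₁ hu₂ hv₂)

end Cmd4

lemma exists_cmd_superset [Finite V] {W K : Set V} {p : ℕ} (hKW : K ⊆ W)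
    (hK : CMPAtLeast G K p) : ∃ F, K ⊆ F ∧ Cmd G W p F := by
  obtain ⟨F, hKF, hF⟩ := Finite.exists_le_maximal (p := fun F => F ⊆ W ∧ CMPAtLeast G F p)
    ⟨hKW, hK⟩
  exact ⟨F, hKF, hF.prop.1, hF.prop.2, fun F' hF'W hFF' hF' => (hF.eq_of_le ⟨hF'W, hF'⟩ hFF').symm⟩

lemma IsK4.cmpAtLeast {K : Set V} (hK : IsK4 G K) : CMPAtLeast G K 4 := by
  obtain ⟨hcard, hadj⟩ := hK
  have : Finite K := Set.finite_of_ncard_ne_zero (by omega)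
  let e : Fin 4 ≃ K := (Finite.equivFinOfCardEq hcard).symm
  refine cmpAtLeast_iff.mpr ⟨fun p hp q hq r hr hpq hqr => ?_, fun i => e i, fun i => (e i).2,
    fun i j hij => hadj _ (e i).2 _ (e j).2 fun h => hij (e.injective (Subtype.ext h))⟩
  obtain rfl : p = q := by_contra fun h => hpq (hadj p hp q hq h)
  exact hqr

end

/-- In a prison-free graph `G`, every edge `uv` occurring in some
induced `K₄` lies in a unique `F ∈ cmd₄(G)`. -/
theorem cmd4_unique_for_K4_edge {V : Type*} [Fintype V] (G : SimpleGraph V)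
    (hG : PrisonFree G) (u v : V) (huv : G.Adj u v)
    (hK : ∃ K : Set V, IsK4 G K ∧ u ∈ K ∧ v ∈ K) :
    ∃! F : Set V, Cmd G Set.univ 4 F ∧ u ∈ F ∧ v ∈ F := by
  obtain ⟨K, hK4, huK, hvK⟩ := hK
  obtain ⟨F, hKF, hF⟩ := exists_cmd_superset (Set.subset_univ K) hK4.cmpAtLeast
  refine ⟨F, ⟨hF, hKF huK, hKF hvK⟩, fun F' ⟨hF', hu', hv'⟩ => ?_⟩
  exact hF'.eq_of_adj_mem hG hF huv hu' hv' (hKF huK) (hKF hvK)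

end PrisonFreePaper
end

section
/- Let G be a graph, k∈ℕ with k≥1, and let u,v be distinct vertices of G with uv∉E(G). Then there exists a graph G' on vertex set V(G)∪W, where W is a set of 3(k+1) new vertices disjoint from V(G), such that the induced subgraph of G' on V(G) equals G, and: (1) the minimal solutions to (G',k) are exactly the minimal solutions A to (G,k) satisfying uv∉A, and (2) every solution A to (G',k) satisfies uv∉A. Here a solution to an instance (H,k) is a prison-free completion set for H of size at most k, and a solution is minimal if no proper subset of it is a prison-free completion set for H. -/
/-!
Join `k + 1` blocks of three new vertices to both `u` and `v`, each block carrying a single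
edge. Adding `uv` makes every block together with `u, v` a prison; these prisons pairwise share
only the pair `uv`, so destroying them needs `k + 1` further pairs, and no solution contains
`uv`. While `u` and `v` stay non-adjacent, no prison meets the new vertices (each has at most
one new neighbour and its old neighbours `u`, `v` are independent), so the prisons of `G' ∪ A`
are those of `G ∪ A` and minimal solutions correspond under the inclusion of `V`.
-/

namespace PrisonFreePaper

variable {V : Type*}

section Prison

variable {X Y : Type*} {H K : SimpleGraph X} {H' : SimpleGraph Y} {P : Set X}

instance : DecidableRel prison.Adj := fun a b => inferInstanceAs (Decidable (a ≠ b ∧ _))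

lemma InducesPrison.congr (h : ∀ x ∈ P, ∀ y ∈ P, H.Adj x y ↔ K.Adj x y)
    (hP : InducesPrison H P) : InducesPrison K P := by
  obtain ⟨f, rfl, hf⟩ := hP
  exact ⟨f, rfl, fun a b => (h _ ⟨a, rfl⟩ _ ⟨b, rfl⟩).symm.trans (hf a b)⟩

lemma InducesPrison.map (φ : H ↪g H') (hP : InducesPrison H P) : InducesPrison H' (φ '' P) := by
  obtain ⟨f, rfl, hf⟩ := hP
  exact ⟨f.trans φ.toEmbedding, by rw [← Set.range_comp]; rfl,
    fun a b => φ.map_adj_iff.trans (hf a b)⟩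

lemma InducesPrison.comap (φ : H ↪g H') {P : Set Y} (hP : InducesPrison H' P)
    (hsub : P ⊆ Set.range φ) : InducesPrison H (φ ⁻¹' P) := by
  obtain ⟨f, rfl, hf⟩ := hP
  choose g hg using fun i => hsub (Set.mem_range_self i)
  refine ⟨⟨g, fun i j h => f.injective (by rw [← hg, ← hg, h])⟩, ?_, fun a b => ?_⟩
  · ext x
    refine ⟨?_, fun ⟨i, hi⟩ => ⟨i, φ.injective ((hg i).trans hi)⟩⟩
    rintro ⟨i, rfl⟩
    exact ⟨i, (hg i).symm⟩
  · rw [← hf, ← hg, ← hg]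
    exact φ.map_adj_iff.symm

lemma PrisonFree.of_embedding (φ : H ↪g H') (h : PrisonFree H') : PrisonFree H :=
  fun ⟨_, hP⟩ => h ⟨_, hP.map φ⟩

lemma prisonFree_iff_of_embedding (φ : H ↪g H')
    (hφ : ∀ P, InducesPrison H' P → P ⊆ Set.range φ) : PrisonFree H' ↔ PrisonFree H :=
  ⟨PrisonFree.of_embedding φ, fun h ⟨P, hP⟩ => h ⟨_, hP.comap φ (hφ P hP)⟩⟩

lemma notMem_of_fourClique {S I : Set X} (hI : H.IsIndepSet I)
    (hSI : ∀ x ∈ S, H.neighborSet x ⊆ S ∪ I)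
    (hS : ∀ x ∈ S, (H.neighborSet x ∩ S).Subsingleton)
    {a b c d : X} (hab : H.Adj a b) (hac : H.Adj a c) (had : H.Adj a d)
    (hbc : H.Adj b c) (hbd : H.Adj b d) (hcd : H.Adj c d) : a ∉ S := by
  intro ha
  have inS {y z} (hy : y ∈ S) (hz : z ∈ S) (hay : H.Adj a y) (haz : H.Adj a z)
      (hyz : H.Adj y z) : False := hyz.ne (hS a ha ⟨hay, hy⟩ ⟨haz, hz⟩)
  have inI {y z} (hy : y ∈ I) (hz : z ∈ I) (hyz : H.Adj y z) : False := hI hy hz hyz.ne hyz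
  rcases hSI a ha hab with hb | hb <;> rcases hSI a ha hac with hc | hc <;>
    rcases hSI a ha had with hd | hd
  exacts [inS hb hc hab hac hbc, inS hb hc hab hac hbc, inS hb hd hab had hbd, inI hc hd hcd,
    inS hc hd hac had hcd, inI hb hd hbd, inI hb hc hbc, inI hb hc hbc]

/-- Every prison vertex but one lies in a `K₄`, and the remaining one has two adjacent
neighbours. -/
lemma InducesPrison.disjoint {S I : Set X} (hI : H.IsIndepSet I)
    (hSI : ∀ x ∈ S, H.neighborSet x ⊆ S ∪ I)
    (hS : ∀ x ∈ S, (H.neighborSet x ∩ S).Subsingleton)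
    (hP : InducesPrison H P) : Disjoint S P := by
  obtain ⟨f, rfl, hf⟩ := hP
  have adj (a b : Fin 5) (h : prison.Adj a b := by decide) : H.Adj (f a) (f b) := (hf a b).2 h
  have noK4 := @notMem_of_fourClique _ _ _ _ hI hSI hS
  rw [Set.disjoint_right]
  rintro _ ⟨t, rfl⟩ ht
  fin_cases t
  · exact noK4 (adj 0 1) (adj 0 2) (adj 0 3) (adj 1 2) (adj 1 3) (adj 2 3) ht
  · exact noK4 (adj 1 0) (adj 1 2) (adj 1 3) (adj 0 2) (adj 0 3) (adj 2 3) ht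
  · exact noK4 (adj 2 0) (adj 2 1) (adj 2 3) (adj 0 1) (adj 0 3) (adj 1 3) ht
  · exact noK4 (adj 3 0) (adj 3 1) (adj 3 2) (adj 0 1) (adj 0 2) (adj 1 2) ht
  · rcases hSI _ ht (adj 4 0) with h0 | h0
    · exact noK4 (adj 0 1) (adj 0 2) (adj 0 3) (adj 1 2) (adj 1 3) (adj 2 3) h0
    rcases hSI _ ht (adj 4 1) with h1 | h1
    · exact noK4 (adj 1 0) (adj 1 2) (adj 1 3) (adj 0 2) (adj 0 3) (adj 2 3) h1
    exact hI h0 h1 (adj 0 1).ne (adj 0 1)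

end Prison

section Gadget

variable {X W : Type*}

lemma addEdges_adj (H : SimpleGraph X) (A : Set (Sym2 X)) (x y : X) :
    (addEdges H A).Adj x y ↔ H.Adj x y ∨ s(x, y) ∈ A ∧ x ≠ y := by
  simp [addEdges]

lemma exists_mem_sym2_of_inducesPrison {H : SimpleGraph X} {A B : Set (Sym2 X)} {P : Set X}
    (hBA : B ⊆ A) (hP : InducesPrison (addEdges H B) P) (hA : PrisonFree (addEdges H A)) :
    ∃ e ∈ A, e ∉ B ∧ e ∈ P.sym2 := by
  by_contra! h
  refine hA ⟨P, hP.congr fun x hx y hy => ?_⟩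
  simp only [addEdges_adj]
  exact or_congr_right ⟨fun ⟨he, hxy⟩ => ⟨hBA he, hxy⟩,
    fun ⟨he, hxy⟩ => ⟨by_contra fun hB => h _ he hB ⟨hx, hy⟩, hxy⟩⟩

lemma Sym2.eq_of_mem_sym2_pair {a b : X} {e : Sym2 X} (he : e ∈ ({a, b} : Set X).sym2)
    (hd : ¬ e.IsDiag) : e = s(a, b) := by
  induction e using Sym2.ind with
  | _ x y =>
    simp only [Set.mk_mem_sym2_iff, Set.mem_insert_iff, Set.mem_singleton_iff] at he
    rcases he with ⟨rfl | rfl, rfl | rfl⟩ <;> simp_all [Sym2.eq_swap]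

open Sum in
def pairJoin (G : SimpleGraph X) (M : SimpleGraph W) (u v : X) : SimpleGraph (X ⊕ W) where
  Adj
    | inl a, inl b => G.Adj a b
    | inl a, inr _ => a = u ∨ a = v
    | inr _, inl a => a = u ∨ a = v
    | inr x, inr y => M.Adj x y
  symm := by
    constructor
    rintro (a | x) (b | y) h
    exacts [h.symm, h, h, h.symm]
  loopless := by
    constructor
    rintro (a | x) h
    exacts [G.irrefl h, M.irrefl h]

variable {G : SimpleGraph X} {M : SimpleGraph W} {u v : X}

@[simp] lemma pairJoin_adj_inl_inl (a b : X) :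
    (pairJoin G M u v).Adj (.inl a) (.inl b) ↔ G.Adj a b := Iff.rfl

@[simp] lemma pairJoin_adj_inl_inr (a : X) (x : W) :
    (pairJoin G M u v).Adj (.inl a) (.inr x) ↔ a = u ∨ a = v := Iff.rfl

@[simp] lemma pairJoin_adj_inr_inl (x : W) (a : X) :
    (pairJoin G M u v).Adj (.inr x) (.inl a) ↔ a = u ∨ a = v := Iff.rfl

@[simp] lemma pairJoin_adj_inr_inr (x y : W) :
    (pairJoin G M u v).Adj (.inr x) (.inr y) ↔ M.Adj x y := Iff.rfl

def inlEmbedding (A' : Set (Sym2 (X ⊕ W))) :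
    addEdges G (Sym2.map Sum.inl ⁻¹' A') ↪g addEdges (pairJoin G M u v) A' where
  toEmbedding := .inl
  map_rel_iff' {a b} := by simp [addEdges_adj]

lemma inducesPrison_subset_range_inl (hM : ∀ x, (M.neighborSet x).Subsingleton)
    (huv : ¬ G.Adj u v) {A' : Set (Sym2 (X ⊕ W))} (hA' : A' ⊆ Set.range (Sym2.map Sum.inl))
    (huvA' : s(.inl u, .inl v) ∉ A') {P : Set (X ⊕ W)}
    (hP : InducesPrison (addEdges (pairJoin G M u v) A') P) : P ⊆ Set.range Sum.inl := by
  have notMem_inr (x : W) (y : X ⊕ W) : s(.inr x, y) ∉ A' := by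
    rintro h
    obtain ⟨e, he⟩ := hA' h
    induction e using Sym2.ind
    simp at he
  have hI : (addEdges (pairJoin G M u v) A').IsIndepSet {.inl u, .inl v} := by
    have huv' : ¬ (addEdges (pairJoin G M u v) A').Adj (.inl u) (.inl v) := by
      simp [addEdges_adj, huv, huvA']
    exact Set.pairwise_pair.2 fun _ => ⟨huv', fun h => huv' h.symm⟩
  have hSI : ∀ x ∈ Set.range Sum.inr,
      (addEdges (pairJoin G M u v) A').neighborSet x ⊆
        Set.range Sum.inr ∪ {.inl u, .inl v} := by
    rintro _ ⟨x, rfl⟩ (a | y) h <;> simp_all [addEdges_adj]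
  have hS : ∀ x ∈ Set.range Sum.inr,
      ((addEdges (pairJoin G M u v) A').neighborSet x ∩ Set.range Sum.inr).Subsingleton := by
    rintro _ ⟨x, rfl⟩ _ ⟨hy, y, rfl⟩ _ ⟨hz, z, rfl⟩
    simp only [SimpleGraph.mem_neighborSet, addEdges_adj, notMem_inr, false_and, or_false,
      pairJoin_adj_inr_inr] at hy hz
    rw [hM x hy hz]
  rw [← Set.compl_range_inr]
  exact (hP.disjoint hI hSI hS).subset_compl_left

end Gadget

section Transfer

variable {X W : Type*} {G : SimpleGraph X} {M : SimpleGraph W} {u v : X}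

lemma map_inl_mem_edgeSet_pairJoin (e : Sym2 X) :
    Sym2.map Sum.inl e ∈ (pairJoin G M u v).edgeSet ↔ e ∈ G.edgeSet := by
  induction e using Sym2.ind
  simp

lemma CompletionSet.preimage_inl {A' : Set (Sym2 (X ⊕ W))}
    (h : CompletionSet (pairJoin G M u v) A') : CompletionSet G (Sym2.map Sum.inl ⁻¹' A') :=
  ⟨fun _ he hd => h.1 _ he ((Sym2.isDiag_map Sum.inl_injective).2 hd),
    fun e he he' => h.2.1 _ he ((map_inl_mem_edgeSet_pairJoin e).2 he'),
    h.2.2.of_embedding (inlEmbedding A')⟩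

lemma completionSet_image_inl_iff (hM : ∀ x, (M.neighborSet x).Subsingleton)
    (huv : ¬ G.Adj u v) {A : Set (Sym2 X)} (huvA : s(u, v) ∉ A) :
    CompletionSet (pairJoin G M u v) (Sym2.map Sum.inl '' A) ↔ CompletionSet G A := by
  have hinj : Function.Injective (Sym2.map (Sum.inl : X → X ⊕ W)) :=
    Sym2.map.injective Sum.inl_injective
  have hfree := prisonFree_iff_of_embedding (inlEmbedding (G := G) (M := M) (u := u) (v := v)
    (Sym2.map Sum.inl '' A)) fun P hP => inducesPrison_subset_range_inl hM huv
      (Set.image_subset_range _ _) (by rwa [← Sym2.map_mk, hinj.mem_set_image]) hP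
  rw [Set.preimage_image_eq A hinj] at hfree
  simp only [CompletionSet, Set.forall_mem_image, Sym2.isDiag_map Sum.inl_injective,
    map_inl_mem_edgeSet_pairJoin, hfree]

end Transfer

section Copies

variable {X : Type*} {G : SimpleGraph X} {k : ℕ} {u v : X}

def blockMatching (n : ℕ) : SimpleGraph (Fin n) :=
  SimpleGraph.fromRel fun j j' => j.val % 3 = 0 ∧ j'.val = j.val + 1

lemma blockMatching_neighborSet_subsingleton {n : ℕ} (j : Fin n) :
    ((blockMatching n).neighborSet j).Subsingleton := by
  intro y hy z hz
  simp only [blockMatching, SimpleGraph.mem_neighborSet, SimpleGraph.fromRel_adj, ne_eq,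
    Fin.ext_iff] at hy hz
  exact Fin.ext (by omega)

def copyMap (u v : X) (i : Fin (k + 1)) : Fin 5 → X ⊕ Fin (3 * (k + 1)) :=
  ![.inl u, .inl v, .inr ⟨3 * i, by omega⟩, .inr ⟨3 * i + 1, by omega⟩,
    .inr ⟨3 * i + 2, by omega⟩]

lemma inducesPrison_copy (huv : u ≠ v) (i : Fin (k + 1)) :
    InducesPrison (addEdges (pairJoin G (blockMatching (3 * (k + 1))) u v) {s(.inl u, .inl v)})
      (Set.range (copyMap u v i)) := by
  refine ⟨⟨copyMap u v i, fun a b h => ?_⟩, rfl, fun a b => ?_⟩ <;>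
    fin_cases a <;> fin_cases b <;>
    simp_all [copyMap, addEdges_adj, blockMatching, prison, Fin.ext_iff, Ne.symm huv]

lemma copy_inter_copy_subset {i i' : Fin (k + 1)} (hii' : i ≠ i') :
    Set.range (copyMap u v i) ∩ Set.range (copyMap u v i') ⊆ {.inl u, .inl v} := by
  rintro _ ⟨⟨a, rfl⟩, b, hb⟩
  have := Fin.val_ne_of_ne hii'
  fin_cases a <;> fin_cases b <;> simp_all [copyMap] <;> omega

lemma inl_pair_notMem_of_solution (huv : u ≠ v) {A' : Set (Sym2 (X ⊕ Fin (3 * (k + 1))))}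
    (h : Solution (pairJoin G (blockMatching (3 * (k + 1))) u v) k A') :
    s(.inl u, .inl v) ∉ A' := by
  intro huvA
  obtain ⟨⟨hdiag, -, hfree⟩, hfin, hcard⟩ := h
  choose e heA heuv hecopy using fun i => exists_mem_sym2_of_inducesPrison
    (Set.singleton_subset_iff.2 huvA) (inducesPrison_copy huv i) hfree
  have hinj : Function.Injective e := by
    intro i i' hii'
    by_contra hne
    refine heuv i (Sym2.eq_of_mem_sym2_pair (Set.mem_sym2_iff_subset.2 ?_) (hdiag _ (heA i)))
    exact (Set.subset_inter (Set.mem_sym2_iff_subset.1 (hecopy i))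
      (hii' ▸ Set.mem_sym2_iff_subset.1 (hecopy i'))).trans (copy_inter_copy_subset hne)
  have hsub : insert s(.inl u, .inl v) (Set.range e) ⊆ A' :=
    Set.insert_subset huvA (Set.range_subset_iff.2 heA)
  have := Set.ncard_le_ncard hsub hfin
  rw [Set.ncard_insert_of_notMem (by rintro ⟨i, hi⟩; exact heuv i hi),
    Set.ncard_range_of_injective hinj, Nat.card_eq_fintype_card, Fintype.card_fin] at this
  omega

end Copies

section MinimalSolutions

variable {X W : Type*} {G : SimpleGraph X} {M : SimpleGraph W} {u v : X} {k : ℕ}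

lemma minSolution_image_inl (hM : ∀ x, (M.neighborSet x).Subsingleton)
    (huv : ¬ G.Adj u v) {A : Set (Sym2 X)} (hA : MinSolution G k A) (huvA : s(u, v) ∉ A) :
    MinSolution (pairJoin G M u v) k (Sym2.map Sum.inl '' A) := by
  have hinj := Sym2.map.injective (Sum.inl_injective (α := X) (β := W))
  obtain ⟨⟨hcompl, hfin, hcard⟩, hmin⟩ := hA
  refine ⟨⟨(completionSet_image_inl_iff hM huv huvA).2 hcompl, hfin.image _,
    (Set.ncard_image_of_injective A hinj).trans_le hcard⟩, fun B' hB' hB'compl => ?_⟩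
  rw [← Set.image_preimage_eq_of_subset (hB'.subset.trans (Set.image_subset_range _ _))] at hB'
  refine hmin _ ?_ hB'compl.preimage_inl
  exact (hinj.injOn.image_ssubset_image_iff (Set.subset_univ _) (Set.subset_univ _)).1 hB'

lemma MinSolution.eq_image_preimage_inl (hM : ∀ x, (M.neighborSet x).Subsingleton)
    (huv : ¬ G.Adj u v) {A' : Set (Sym2 (X ⊕ W))}
    (h : MinSolution (pairJoin G M u v) k A') (huvA' : s(.inl u, .inl v) ∉ A') :
    Sym2.map Sum.inl '' (Sym2.map Sum.inl ⁻¹' A') = A' := by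
  by_contra hne
  refine h.2 _ ((Set.image_preimage_subset _ _).ssubset_of_ne hne) ?_
  exact (completionSet_image_inl_iff hM huv huvA').2 h.1.1.preimage_inl

lemma MinSolution.preimage_inl (hM : ∀ x, (M.neighborSet x).Subsingleton)
    (huv : ¬ G.Adj u v) {A' : Set (Sym2 (X ⊕ W))}
    (h : MinSolution (pairJoin G M u v) k A') (huvA' : s(.inl u, .inl v) ∉ A') :
    MinSolution G k (Sym2.map Sum.inl ⁻¹' A') := by
  have hinj := Sym2.map.injective (Sum.inl_injective (α := X) (β := W))
  have himage := h.eq_image_preimage_inl hM huv huvA'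
  obtain ⟨⟨hcompl, hfin, hcard⟩, hmin⟩ := h
  refine ⟨⟨hcompl.preimage_inl, hfin.preimage hinj.injOn, ?_⟩, fun B hB hBcompl => ?_⟩
  · rwa [← himage, Set.ncard_image_of_injective _ hinj] at hcard
  · refine hmin _ (himage ▸ hinj.image_strictMono hB) ?_
    exact (completionSet_image_inl_iff hM huv fun huvB => huvA' (hB.subset huvB)).2 hBcompl

end MinimalSolutions

theorem forbidden_edge_gadget_general {V : Type*}
    (G : SimpleGraph V) (k : ℕ) (u v : V) (huv : u ≠ v)
    (hnadj : ¬ G.Adj u v) :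
    ∃ G' : SimpleGraph (V ⊕ Fin (3 * (k + 1))),
      (∀ a b : V, G'.Adj (Sum.inl a) (Sum.inl b) ↔ G.Adj a b) ∧
      (∀ A' : Set (Sym2 (V ⊕ Fin (3 * (k + 1)))),
        MinSolution G' k A' ↔
          ∃ A : Set (Sym2 V), MinSolution G k A ∧ s(u, v) ∉ A ∧
            A' = Sym2.map Sum.inl '' A) ∧
      (∀ A' : Set (Sym2 (V ⊕ Fin (3 * (k + 1)))),
        Solution G' k A' → s(Sum.inl u, Sum.inl v) ∉ A') := by
  have hM := blockMatching_neighborSet_subsingleton (n := 3 * (k + 1))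
  refine ⟨pairJoin G (blockMatching _) u v, fun a b => Iff.rfl, fun A' => ⟨fun h => ?_, ?_⟩,
    fun A' h => inl_pair_notMem_of_solution huv h⟩
  · have huvA' := inl_pair_notMem_of_solution huv h.1
    exact ⟨_, h.preimage_inl hM hnadj huvA', huvA',
      (h.eq_image_preimage_inl hM hnadj huvA').symm⟩
  · rintro ⟨A, hA, huvA, rfl⟩
    exact minSolution_image_inl hM hnadj hA huvA

/-- Forbidden-edge gadget: for every graph `G`, `k ≥ 1` and
non-adjacent distinct vertices `u, v`, there is a graph `G'` on `V(G)` plus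
`3(k+1)` new vertices, inducing `G` on `V(G)`, whose minimal solutions are exactly
the minimal solutions `A` of `(G,k)` with `uv ∉ A`, and all of whose solutions
avoid `uv`. -/
theorem forbidden_edge_gadget {V : Type*} [Fintype V] [DecidableEq V]
    (G : SimpleGraph V) (k : ℕ) (hk : 1 ≤ k) (u v : V) (huv : u ≠ v)
    (hnadj : ¬ G.Adj u v) :
    ∃ G' : SimpleGraph (V ⊕ Fin (3 * (k + 1))),
      (∀ a b : V, G'.Adj (Sum.inl a) (Sum.inl b) ↔ G.Adj a b) ∧
      (∀ A' : Set (Sym2 (V ⊕ Fin (3 * (k + 1)))),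
        MinSolution G' k A' ↔
          ∃ A : Set (Sym2 V), MinSolution G k A ∧ s(u, v) ∉ A ∧
            A' = Sym2.map Sum.inl '' A) ∧
      (∀ A' : Set (Sym2 (V ⊕ Fin (3 * (k + 1)))),
        Solution G' k A' → s(Sum.inl u, Sum.inl v) ∉ A') :=
  forbidden_edge_gadget_general G k u v huv hnadj

end PrisonFreePaper
end

section
/- For every graph G and every integer k≥1, at least one of the following holds: (a) G contains k+2 five-vertex sets, each inducing a prison, whose edge sets are pairwise disjoint (so that (G,k) is a no-instance of Prison-Free Edge Deletion); or (b) there exists a set S⊆V(G) with |S| ≤ 5·8!·(k+1)^8 such that for every 5-vertex set P inducing a prison in G and every A⊆E(G) with |A|≤k, if deleting the edges of A from the induced subgraph G[S] yields a prison-free graph, then A contains an edge of G[P]. -/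
namespace PrisonFreePaper

variable {V : Type*}

/-!
The edge sets of the induced prisons of `G` form a family of 8-element sets. If there are more
than `8! (k+1)^8` of them, the Erdős–Rado lemma gives a sunflower with `k + 2` petals, and one
petal can be discarded: a set of at most `k` edges meeting the other `k + 1` petals but not the
discarded one misses the core, so it would meet the other petals in pairwise disjoint sets.
Iterating leaves at most `8! (k+1)^8` prisons such that every set of at most `k` edges meeting
all of them meets every prison. Take `S` to be the union of their vertex sets: a prison inside
`S` whose edges avoid `A` survives as an induced prison of `G[S] − A`.
-/

section Sunflower

open Finset Nat

variable {α : Type*} [DecidableEq α]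

def IsSunflower (S : Finset (Finset α)) (C : Finset α) : Prop :=
  ∀ X ∈ S, ∀ Y ∈ S, X ≠ Y → X ∩ Y = C

theorem isSunflower_empty_of_pairwiseDisjoint {S : Finset (Finset α)}
    (hS : (S : Set (Finset α)).PairwiseDisjoint id) : IsSunflower S ∅ :=
  fun _ hX _ hY hXY => disjoint_iff_inter_eq_empty.mp (hS hX hY hXY)

theorem exists_pairwiseDisjoint_forall_not_disjoint (F : Finset (Finset α)) :
    ∃ D ⊆ F, (D : Set (Finset α)).PairwiseDisjoint id ∧
      ∀ Y ∈ F, Y.Nonempty → ∃ X ∈ D, ¬ Disjoint Y X := by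
  classical
  obtain ⟨D, hD, hmax⟩ := (F.powerset.filter fun D : Finset (Finset α) =>
    (D : Set (Finset α)).PairwiseDisjoint id).exists_maximal ⟨∅, by simp⟩
  simp only [mem_filter, mem_powerset] at hD hmax
  refine ⟨D, hD.1, hD.2, fun Y hY hYne => ?_⟩
  by_contra! hdisj
  have hinsert : (↑(insert Y D) : Set (Finset α)).PairwiseDisjoint id := by
    rw [coe_insert]
    exact hD.2.insert fun X hX _ => hdisj X hX
  have hYD : Y ∈ D :=
    hmax ⟨insert_subset hY hD.1, hinsert⟩ (subset_insert Y D) (mem_insert_self Y D)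
  exact hYne.ne_empty (disjoint_self_iff_empty Y |>.mp (hdisj Y hYD))

theorem exists_lt_card_filter_mem {F : Finset (Finset α)} {U : Finset α} {m : ℕ}
    (hmeet : ∀ Y ∈ F, ¬ Disjoint Y U) (h : #U * m < #F) :
    ∃ x ∈ U, m < #(F.filter (x ∈ ·)) := by
  have hcover : F ⊆ U.biUnion fun x => F.filter (x ∈ ·) := by
    intro Y hY
    obtain ⟨x, hxY, hxU⟩ := not_disjoint_iff.mp (hmeet Y hY)
    exact mem_biUnion.mpr ⟨x, hxU, mem_filter.mpr ⟨hY, hxY⟩⟩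
  apply exists_lt_of_sum_lt
  calc ∑ _x ∈ U, m = #U * m := by rw [sum_const, smul_eq_mul]
    _ < #F := h
    _ ≤ ∑ x ∈ U, #(F.filter (x ∈ ·)) := (card_le_card hcover).trans card_biUnion_le

def link (F : Finset (Finset α)) (x : α) : Finset (Finset α) :=
  (F.filter (x ∈ ·)).image (·.erase x)

theorem card_link (F : Finset (Finset α)) (x : α) : #(link F x) = #(F.filter (x ∈ ·)) := by
  refine Finset.card_image_of_injOn fun Y hY Z hZ hYZ => ?_
  rw [mem_coe, mem_filter] at hY hZ
  rw [← insert_erase hY.2, ← insert_erase hZ.2]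
  exact congrArg (insert x) hYZ

theorem card_of_mem_link {F : Finset (Finset α)} {x : α} {s : ℕ} (hF : ∀ X ∈ F, #X = s + 1)
    {Z : Finset α} (hZ : Z ∈ link F x) : #Z = s := by
  obtain ⟨Y, hY, rfl⟩ := mem_image.mp hZ
  rw [mem_filter] at hY
  rw [card_erase_of_mem hY.2, hF Y hY.1, Nat.add_sub_cancel]

theorem exists_isSunflower_of_link {F : Finset (Finset α)} {x : α} {q : ℕ}
    {S : Finset (Finset α)} (hS : S ⊆ link F x) (hcard : #S = q + 1) {C : Finset α}
    (hSC : IsSunflower S C) :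
    ∃ S ⊆ F, #S = q + 1 ∧ ∃ C, IsSunflower S C := by
  have hx : ∀ Z ∈ S, x ∉ Z := fun Z hZ => by
    obtain ⟨Y, _, rfl⟩ := mem_image.mp (hS hZ)
    exact notMem_erase x Y
  refine ⟨S.image (insert x), ?_, ?_, insert x C, ?_⟩
  · intro W hW
    obtain ⟨Z, hZ, rfl⟩ := mem_image.mp hW
    obtain ⟨Y, hY, rfl⟩ := mem_image.mp (hS hZ)
    rw [mem_filter] at hY
    rw [insert_erase hY.2]
    exact hY.1
  · rw [Finset.card_image_of_injOn, hcard]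
    intro Z₁ h₁ Z₂ h₂ h
    rw [← erase_insert (hx Z₁ h₁), ← erase_insert (hx Z₂ h₂)]
    exact congrArg (·.erase x) h
  · intro W₁ hW₁ W₂ hW₂ hne
    obtain ⟨Z₁, hZ₁, rfl⟩ := mem_image.mp hW₁
    obtain ⟨Z₂, hZ₂, rfl⟩ := mem_image.mp hW₂
    rw [← insert_inter_distrib, hSC Z₁ hZ₁ Z₂ hZ₂ fun h => hne (h ▸ rfl)]

/-- The Erdős–Rado sunflower lemma. -/
theorem exists_isSunflower (q s : ℕ) (F : Finset (Finset α)) (hF : ∀ X ∈ F, #X = s)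
    (hbig : s ! * q ^ s < #F) : ∃ S ⊆ F, #S = q + 1 ∧ ∃ C, IsSunflower S C := by
  induction s generalizing F with
  | zero =>
    have hF1 : #F ≤ 1 := (card_le_card fun X hX =>
      mem_singleton.mpr (card_eq_zero.mp (hF X hX))).trans_eq (card_singleton ∅)
    simp only [factorial_zero, pow_zero, mul_one] at hbig
    omega
  | succ s ih =>
    obtain ⟨D, hDF, hDdisj, hDmeet⟩ := exists_pairwiseDisjoint_forall_not_disjoint F
    by_cases hD : q + 1 ≤ #D
    · obtain ⟨S, hSD, hS⟩ := exists_subset_card_eq hD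
      exact ⟨S, hSD.trans hDF, hS, ∅,
        isSunflower_empty_of_pairwiseDisjoint (hDdisj.subset (coe_subset.mpr hSD))⟩
    set U := D.biUnion id
    have hmeet : ∀ Y ∈ F, ¬ Disjoint Y U := by
      intro Y hY
      obtain ⟨X, hXD, hYX⟩ := hDmeet Y hY (card_pos.mp (by rw [hF Y hY]; omega))
      exact fun h => hYX (h.mono_right (subset_biUnion_of_mem id hXD))
    have hU : #U * (s ! * q ^ s) < #F := calc
      #U * (s ! * q ^ s) ≤ (#D * (s + 1)) * (s ! * q ^ s) := by
        gcongr
        exact card_biUnion_le.trans_eq (sum_const_nat fun X hX => hF X (hDF hX))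
      _ ≤ (q * (s + 1)) * (s ! * q ^ s) := by gcongr; omega
      _ = (s + 1)! * q ^ (s + 1) := by rw [Nat.factorial_succ, pow_succ]; ring
      _ < #F := hbig
    obtain ⟨x, -, hx⟩ := exists_lt_card_filter_mem hmeet hU
    obtain ⟨S, hS, hScard, C, hSC⟩ :=
      ih (link F x) (fun Z hZ => card_of_mem_link hF hZ) (card_link F x ▸ hx)
    exact exists_isSunflower_of_link hS hScard hSC

theorem IsSunflower.not_disjoint_of_forall_erase {S : Finset (Finset α)} {C A Y₀ : Finset α}
    (hS : IsSunflower S C) (hY₀ : Y₀ ∈ S) (hA : #A < #(S.erase Y₀))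
    (hhit : ∀ Y ∈ S.erase Y₀, ¬ Disjoint A Y) : ¬ Disjoint A Y₀ := by
  intro hAY₀
  obtain ⟨Y₁, hY₁⟩ := card_pos.mp ((Nat.zero_le _).trans_lt hA)
  have hCY₀ : C ⊆ Y₀ :=
    hS Y₀ hY₀ Y₁ (mem_of_mem_erase hY₁) (ne_of_mem_erase hY₁).symm ▸ inter_subset_left
  have hAC : Disjoint A C := hAY₀.mono_right hCY₀
  -- `A` misses the core, so distinct petals meet `A` in disjoint sets
  refine hA.not_ge (card_le_card_of_forall_subsingleton (fun Y a => a ∈ Y) ?_ ?_)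
  · intro Y hY
    obtain ⟨a, haA, haY⟩ := not_disjoint_iff.mp (hhit Y hY)
    exact ⟨a, haA, haY⟩
  · intro a ha Y₁ hY₁ Y₂ hY₂
    by_contra hne
    have hS₁₂ := hS Y₁ (mem_of_mem_erase hY₁.1) Y₂ (mem_of_mem_erase hY₂.1) hne
    exact disjoint_left.mp hAC ha (hS₁₂ ▸ mem_inter.mpr ⟨hY₁.2, hY₂.2⟩)

theorem exists_hitting_representatives (s k : ℕ) (F : Finset (Finset α))
    (hF : ∀ X ∈ F, #X = s) :
    ∃ R ⊆ F, #R ≤ s ! * (k + 1) ^ s ∧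
      ∀ A : Finset α, #A ≤ k → (∀ Y ∈ R, ¬ Disjoint A Y) →
        ∀ X ∈ F, ¬ Disjoint A X := by
  induction F using Finset.strongInduction with
  | H F ih =>
  by_cases hsmall : #F ≤ s ! * (k + 1) ^ s
  · exact ⟨F, subset_rfl, hsmall, fun A _ hA => hA⟩
  obtain ⟨S, hSF, hScard, C, hSC⟩ := exists_isSunflower (k + 1) s F hF (not_le.mp hsmall)
  obtain ⟨Y₀, hY₀⟩ := card_pos.mp (by omega : 0 < #S)
  obtain ⟨R, hR, hRcard, hRhit⟩ :=
    ih (F.erase Y₀) (erase_ssubset (hSF hY₀)) fun X hX => hF X (mem_of_mem_erase hX)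
  refine ⟨R, hR.trans (erase_subset _ _), hRcard, fun A hA hAR X hX => ?_⟩
  have hrest : ∀ Y ∈ F.erase Y₀, ¬ Disjoint A Y := hRhit A hA hAR
  obtain rfl | hXY₀ := eq_or_ne X Y₀
  · exact hSC.not_disjoint_of_forall_erase hY₀ (by rw [card_erase_of_mem hY₀]; omega)
      fun Y hY => hrest Y (erase_subset_erase _ hSF hY)
  · exact hrest X (mem_erase.mpr ⟨hXY₀, hX⟩)

theorem exists_hitting_representatives_of_index {ι : Type*} (s k : ℕ) (I : Finset ι)
    (E : ι → Finset α) (hE : ∀ i ∈ I, #(E i) = s) :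
    ∃ R ⊆ I, #R ≤ s ! * (k + 1) ^ s ∧
      ∀ A : Finset α, #A ≤ k → (∀ j ∈ R, ¬ Disjoint A (E j)) →
        ∀ i ∈ I, ¬ Disjoint A (E i) := by
  classical
  obtain ⟨R', hR', hR'card, hR'hit⟩ :=
    exists_hitting_representatives s k (I.image E) (forall_mem_image.mpr hE)
  obtain ⟨R, hRI, hRinj, rfl⟩ :=
    exists_subset_injOn_image_eq_of_surjOn (f := E) I R' fun Y hY => by simpa using hR' hY
  refine ⟨R, coe_subset.mp hRI, Finset.card_image_of_injOn hRinj ▸ hR'card, ?_⟩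
  exact fun A hA hAR i hi => hR'hit A hA (forall_mem_image.mpr hAR) (E i) (mem_image_of_mem E hi)

end Sunflower

section Prisons

variable {G : SimpleGraph V} {P : Set V}

instance inst_s7 : DecidableRel prison.Adj := fun _ _ => by
  unfold prison
  infer_instance

theorem prison_edgeSet_ncard : prison.edgeSet.ncard = 8 := by
  rw [Set.ncard_eq_toFinset_card']
  decide

theorem edgesWithin_range_eq_image {f : Fin 5 ↪ V}
    (hf : ∀ a b, G.Adj (f a) (f b) ↔ prison.Adj a b) :
    edgesWithin G (Set.range f) = Sym2.map f '' prison.edgeSet := by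
  ext e
  induction e with
  | _ x y =>
    constructor
    · rintro ⟨hxy, ⟨a, rfl⟩, ⟨b, rfl⟩⟩
      exact ⟨s(a, b), (hf a b).mp hxy, rfl⟩
    · rintro ⟨e, he, hfe⟩
      induction e with
      | _ a b =>
        rw [Sym2.map_mk, Sym2.eq_iff] at hfe
        rcases hfe with ⟨rfl, rfl⟩ | ⟨rfl, rfl⟩
        · exact ⟨(hf a b).mpr he, Set.mem_range_self a, Set.mem_range_self b⟩
        · exact ⟨((hf a b).mpr he).symm, Set.mem_range_self b, Set.mem_range_self a⟩

theorem InducesPrison.ncard (hP : InducesPrison G P) : P.ncard = 5 := by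
  obtain ⟨f, rfl, -⟩ := hP
  rw [← Set.image_univ, Set.ncard_image_of_injective _ f.injective, Set.ncard_univ, Nat.card_fin]

theorem InducesPrison.ncard_edgesWithin (hP : InducesPrison G P) :
    (edgesWithin G P).ncard = 8 := by
  obtain ⟨f, rfl, hf⟩ := hP
  rw [edgesWithin_range_eq_image hf,
    Set.ncard_image_of_injective _ (Sym2.map.injective f.injective), prison_edgeSet_ncard]

theorem InducesPrison.deleteEdges_inducedOn (hP : InducesPrison G P) {S : Set V} (hPS : P ⊆ S)
    {A : Set (Sym2 V)} (hA : Disjoint A (edgesWithin G P)) :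
    InducesPrison ((inducedOn G S).deleteEdges A) P := by
  obtain ⟨f, rfl, hf⟩ := hP
  refine ⟨f, rfl, fun a b => ?_⟩
  rw [SimpleGraph.deleteEdges_adj, ← hf]
  have hab : G.Adj (f a) (f b) → s(f a, f b) ∈ edgesWithin G (Set.range f) :=
    fun h => ⟨h, Set.mem_range_self a, Set.mem_range_self b⟩
  exact ⟨fun h => h.1.1, fun h =>
    ⟨⟨h, hPS (Set.mem_range_self a), hPS (Set.mem_range_self b)⟩,
      fun hA' => Set.disjoint_left.mp hA hA' (hab h)⟩⟩

theorem goodModulator_biUnion {k : ℕ} {R : Finset (Set V)} (hR : ∀ Q ∈ R, InducesPrison G Q)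
    (hhit : ∀ A : Set (Sym2 V), A.ncard ≤ k →
      (∀ Q ∈ R, ¬ Disjoint A (edgesWithin G Q)) →
      ∀ P, InducesPrison G P → ¬ Disjoint A (edgesWithin G P)) :
    GoodModulator G k (⋃ Q ∈ R, Q) := by
  intro P hP A _ _ hAk hfree
  refine Set.not_disjoint_iff.mp (hhit A hAk (fun Q hQ hAQ => hfree ?_) P hP)
  exact ⟨Q, (hR Q hQ).deleteEdges_inducedOn
    (Set.subset_biUnion_of_mem (u := fun Q => Q) hQ) hAQ⟩

end Prisons

theorem sunflower_modulator_general {V : Type*} [Fintype V] (G : SimpleGraph V)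
    (k : ℕ) :
    (∃ Ps : Fin (k + 2) → Set V,
      (∀ i, InducesPrison G (Ps i)) ∧
      ∀ i j, i ≠ j → Disjoint (edgesWithin G (Ps i)) (edgesWithin G (Ps j))) ∨
    (∃ S : Set V, S.ncard ≤ 5 * Nat.factorial 8 * (k + 1) ^ 8 ∧
      GoodModulator G k S) := by
  classical
  right
  let prisons : Finset (Set V) := Finset.univ.filter (InducesPrison G)
  have hprisons : ∀ P ∈ prisons, InducesPrison G P := fun P hP => (Finset.mem_filter.mp hP).2
  obtain ⟨R, hR, hRcard, hRhit⟩ :=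
    exists_hitting_representatives_of_index 8 k prisons (fun P => (edgesWithin G P).toFinset)
      fun P hP => by rw [← Set.ncard_eq_toFinset_card', (hprisons P hP).ncard_edgesWithin]
  refine ⟨⋃ Q ∈ R, Q, ?_, goodModulator_biUnion (fun Q hQ => hprisons Q (hR hQ)) ?_⟩
  · calc (⋃ Q ∈ R, Q).ncard ≤ ∑ Q ∈ R, Q.ncard := R.set_ncard_biUnion_le _
      _ = R.card * 5 := Finset.sum_const_nat fun Q hQ => (hprisons Q (hR hQ)).ncard
      _ ≤ Nat.factorial 8 * (k + 1) ^ 8 * 5 := by gcongr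
      _ = 5 * Nat.factorial 8 * (k + 1) ^ 8 := by ring
  · intro A hAk hAR P hP
    have hAcard : A.toFinset.card ≤ k := by rwa [← Set.ncard_eq_toFinset_card']
    simpa using hRhit A.toFinset hAcard (by simpa using hAR) P (by simpa [prisons] using hP)

/-- For every graph `G` and `k ≥ 1`: either `G` contains `k+2`
pairwise edge-disjoint induced prisons (so `(G,k)` is a no-instance), or there is a
set `S` with `|S| ≤ 5·8!·(k+1)⁸` such that any edge set `A` of size at most `k`
whose deletion from `G[S]` leaves a prison-free graph contains an edge of every
prison of `G`. -/
theorem sunflower_modulator {V : Type*} [Fintype V] (G : SimpleGraph V)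
    (k : ℕ) (hk : 1 ≤ k) :
    (∃ Ps : Fin (k + 2) → Set V,
      (∀ i, InducesPrison G (Ps i)) ∧
      ∀ i j, i ≠ j → Disjoint (edgesWithin G (Ps i)) (edgesWithin G (Ps j))) ∨
    (∃ S : Set V, S.ncard ≤ 5 * Nat.factorial 8 * (k + 1) ^ 8 ∧
      GoodModulator G k S) :=
  sunflower_modulator_general G k

end PrisonFreePaper
end
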